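/- Let G be a finite simple graph on vertex set V = Fin n, let p : Fin n → ℕ be an injective function into the prime numbers, define L_v = ∏_{u ∈ N_G(v)} p_u where N_G(v) is the closed/specified neighborhood of v, and P = ∏_{v ∈ V} p_v. Then for any S ⊆ V with |S| = k, ∏_{v∈S} L_v = P if and only if the neighborhoods {N_G(v) : v ∈ S} are pairwise disjoint and their union is V. -/
import Mathlib


theorem stmt_3 (n k : ℕ) (G : SimpleGraph (Fin n)) [DecidableRel G.Adj]
    (p : Fin n → ℕ) (hp : ∀ v, (p v).Prime) (hinj : Function.Injective p)
    (L : Fin n → ℕ) (hLdef : ∀ v, L v = ∏ u ∈ G.neighborFinset v, p u)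
    (P : ℕ) (hPdef : P = ∏ v, p v)
    (S : Finset (Fin n)) (hS : S.card = k) :
    (∏ v ∈ S, L v) = P ↔
      ((∀ v ∈ S, ∀ w ∈ S, v ≠ w → Disjoint (G.neighborFinset v) (G.neighborFinset w)) ∧
        S.biUnion (fun v => G.neighborFinset v) = Finset.univ) := by
  classical
  set N : Fin n → Finset (Fin n) := fun v => G.neighborFinset v with hN
  set M : Multiset (Fin n) := S.val.bind (fun v => (N v).val) with hM
  -- products as multiset products
  have h1 : (∏ v ∈ S, L v) = (M.map p).prod := by
    simp only [hM, Multiset.map_bind, Multiset.prod_bind]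
    rw [Finset.prod_eq_multiset_prod]
    congr 1
    apply Multiset.map_congr rfl
    intro v hv
    rw [hLdef v, Finset.prod_eq_multiset_prod]
  have h2 : P = ((Finset.univ.val : Multiset (Fin n)).map p).prod := by
    rw [hPdef, Finset.prod_eq_multiset_prod]
  -- count formula
  have hcount : ∀ a : Fin n, Multiset.count a M
      = ∑ x ∈ S, (if a ∈ N x then 1 else 0) := by
    intro a
    rw [hM, Multiset.count_bind, Finset.sum_eq_multiset_sum]
    congr 1
    apply Multiset.map_congr rfl
    intro x hx
    by_cases h : a ∈ N x
    · rw [if_pos h, Multiset.count_eq_one_of_mem (N x).nodup h]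
    · rw [if_neg h, Multiset.count_eq_zero_of_notMem h]
  -- key: products equal iff multisets equal
  have key : (M.map p).prod = ((Finset.univ.val : Multiset (Fin n)).map p).prod
      ↔ M = Finset.univ.val := by
    constructor
    · intro h
      have hrel := UniqueFactorizationMonoid.factors_unique
        (f := M.map p) (g := (Finset.univ.val : Multiset (Fin n)).map p)
        (fun x hx => by
          obtain ⟨v, _, rfl⟩ := Multiset.mem_map.mp hx
          exact hp v)
        (fun x hx => by
          obtain ⟨v, _, rfl⟩ := Multiset.mem_map.mp hx
          exact hp v)
        (h ▸ Associated.refl _)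
      have heq : M.map p = (Finset.univ.val : Multiset (Fin n)).map p := by
        rw [← Multiset.rel_eq]
        exact hrel.mono (fun a _ b _ hab => associated_iff_eq.mp hab)
      exact Multiset.map_injective hinj heq
    · intro h; rw [h]
  rw [h1, h2, key]
  constructor
  · intro h
    have hc1 : ∀ a : Fin n, (∑ x ∈ S, (if a ∈ N x then 1 else 0)) = 1 := by
      intro a
      rw [← hcount, h]
      exact Multiset.count_eq_one_of_mem Finset.univ.nodup (Finset.mem_univ a)
    constructor
    · intro v hv w hw hvw
      rw [Finset.disjoint_left]
      intro a hav haw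
      have hle : (2 : ℕ) ≤ ∑ x ∈ S, (if a ∈ N x then 1 else 0) := by
        have hsub : ({v, w} : Finset (Fin n)) ⊆ S := by
          intro x hx
          rcases Finset.mem_insert.mp hx with rfl | hx
          · exact hv
          · rw [Finset.mem_singleton.mp hx]; exact hw
        calc (2 : ℕ) = ∑ x ∈ ({v, w} : Finset (Fin n)), (if a ∈ N x then 1 else 0) := by
              rw [Finset.sum_pair hvw, if_pos hav, if_pos haw]
          _ ≤ ∑ x ∈ S, (if a ∈ N x then 1 else 0) :=
              Finset.sum_le_sum_of_subset hsub
      rw [hc1 a] at hle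
      omega
    · apply Finset.eq_univ_of_forall
      intro a
      have := hc1 a
      by_contra hnot
      have hz : ∀ x ∈ S, (if a ∈ N x then 1 else 0) = 0 := by
        intro x hx
        rw [if_neg]
        intro hax
        exact hnot (Finset.mem_biUnion.mpr ⟨x, hx, hax⟩)
      rw [Finset.sum_eq_zero hz] at this
      omega
  · rintro ⟨hdisj, huniv⟩
    ext a
    rw [hcount a, Multiset.count_eq_one_of_mem Finset.univ.nodup (Finset.mem_univ a)]
    have ha : a ∈ S.biUnion (fun v => G.neighborFinset v) := huniv ▸ Finset.mem_univ a
    obtain ⟨v, hv, hav⟩ := Finset.mem_biUnion.mp ha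
    rw [Finset.sum_eq_single v]
    · exact if_pos hav
    · intro w hw hwv
      rw [if_neg]
      intro haw
      exact (Finset.disjoint_left.mp (hdisj w hw v hv hwv) haw) hav
    · intro hv'; exact absurd hv hv'
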